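/- arXiv:1408.7010 — 2 statements merged into one kernel-verified Lean document; each statement's English description precedes it below -/
import Mathlib

section
/- In the counter-example with n = 1, d = 2: there is no symmetric 2×2 matrix M = [[M₁, M₂],[M₂, M₃]] and constant λ ∈ ℝ such that for all x, z > 0 and y with y² < xz, the expression x·(2(M₁²+M₂²) − 2qρ²(M₁+M₂)² + 2M₁ − 2qρν(M₁+M₂) + pr₁ − qν²/2) + y·(4M₂(M₂+M₃) − 4qρ²(M₁+M₂)(M₂+M₃) + 4M₂ − 2qρν(M₂+M₃)) + z·(2(M₂²+M₃²) + 2M₃ + pr₁) + (y²/x)·(−2qρ²(M₂+M₃)²) + pr₀ + ℓ²(M₁+M₃) equals λ, given the parameter constraints p < 0, q = p/(p−1) ∈ (0,1), r₁ > 0, ρ ≠ 0, ν ∈ ℝ, ℓ, r₀ real. -/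
/-!
Evaluating the identity at a few points of the cone `x, z > 0, y² < x z` shows that the functions
`x, y, z, y²/x, 1` are linearly independent there, so every coefficient vanishes. The
`y²/x`-coefficient `-2qρ²(M₂ + M₃)²` with `qρ² > 0` forces `M₂ + M₃ = 0`; the `y`-coefficient then
reduces to `4 M₂`, so `M₂ = M₃ = 0`, and the `z`-coefficient reduces to `p r₁ < 0`.
-/

theorem coeffs_eq_zero_of_forall_cone {a b c d k : ℝ}
    (h : ∀ x y z : ℝ, 0 < x → 0 < z → y ^ 2 < x * z →
      x * a + y * b + z * c + y ^ 2 / x * d = k) :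
    a = 0 ∧ b = 0 ∧ c = 0 ∧ d = 0 := by
  have h₁ := h 1 0 1 one_pos one_pos (by norm_num)
  have h₂ := h 1 0 2 one_pos two_pos (by norm_num)
  have h₃ := h 2 0 1 two_pos one_pos (by norm_num)
  have h₄ := h 1 (1 / 2) 1 one_pos one_pos (by norm_num)
  have h₅ := h 1 (-(1 / 2)) 1 one_pos one_pos (by norm_num)
  norm_num at h₁ h₂ h₃ h₄ h₅
  refine ⟨?_, ?_, ?_, ?_⟩ <;> linarith

theorem no_affine_solution (p q ρ ν ℓ r₀ r₁ : ℝ)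
    (hp : p < 0) (hq : q = p / (p - 1)) (hr₁ : 0 < r₁) (hρ : ρ ≠ 0) :
    ¬ ∃ (M₁ M₂ M₃ lam : ℝ), ∀ x y z : ℝ, 0 < x → 0 < z → y ^ 2 < x * z →
      x * (2 * (M₁ ^ 2 + M₂ ^ 2) - 2 * q * ρ ^ 2 * (M₁ + M₂) ^ 2 + 2 * M₁
            - 2 * q * ρ * ν * (M₁ + M₂) + p * r₁ - q * ν ^ 2 / 2)
        + y * (4 * M₂ * (M₂ + M₃) - 4 * q * ρ ^ 2 * (M₁ + M₂) * (M₂ + M₃)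
            + 4 * M₂ - 2 * q * ρ * ν * (M₂ + M₃))
        + z * (2 * (M₂ ^ 2 + M₃ ^ 2) + 2 * M₃ + p * r₁)
        + (y ^ 2 / x) * (-2 * q * ρ ^ 2 * (M₂ + M₃) ^ 2)
        + p * r₀ + ℓ ^ 2 * (M₁ + M₃) = lam := by
  rintro ⟨M₁, M₂, M₃, lam, h⟩
  obtain ⟨-, hy, hz, hyx⟩ := coeffs_eq_zero_of_forall_cone
    fun x y z hx hz hxz => eq_sub_of_add_eq (eq_sub_of_add_eq (h x y z hx hz hxz))
  have hq₀ : 0 < q := hq ▸ div_pos_of_neg_of_neg hp (by linarith)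
  have hM₂₃ : M₂ + M₃ = 0 := by
    simpa [hq₀.ne', hρ] using hyx
  have hM₂ : M₂ = 0 := by simpa [hM₂₃] using hy
  have hM₃ : M₃ = 0 := by linarith
  subst hM₂ hM₃
  nlinarith [mul_neg_of_neg_of_pos hp hr₁]
end

section
/- Let ρ ∈ ℝ^d, C ∈ M^{m×d} with (ρᵀρ)CCᵀ ≤ I_m, and set D := sqrt(I_m − (ρᵀρ)CCᵀ). Let σ ∈ M^{n×m}, ν ∈ ℝ^n, Θ ∈ S^m with Θ² = Θ, σΘ = σ, and let η ∈ M^d. Then the following identity holds: ‖−Cᵀσᵀν ρᵀ + η − CᵀΘCηρ ρᵀ‖² + |Dᵀσᵀν + DᵀΘCηρ|² = νᵀσσᵀν + Tr(ηᵀη) − ρᵀηᵀCᵀΘCηρ, where ‖·‖ is the Frobenius norm on M^d and |·| the Euclidean norm on ℝ^m. (Here the first squared norm is Σ_{k,l}(−(Cᵀσᵀν)_k ρ_l + η_{kl} − (CᵀΘCηρ)_k ρ_l)².) -/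
/-!
Write `u := σᵀν + ΘCηρ`. Then `T = η - (Cᵀu)ρᵀ` and `w = Du`, and since `D² = I - |ρ|²CCᵀ` the
terms `±|ρ|²|Cᵀu|²` of the two squared norms cancel, leaving `tr(ηᵀη) + |u|² - 2⟨u, Cηρ⟩`.
As `Θ` is an orthogonal projection fixing `σᵀν`, this is `tr(ηᵀη) + |σᵀν|² - ⟨Cηρ, ΘCηρ⟩`.
-/

open Matrix

section
open scoped ComplexOrder

/-- The square root of a positive semidefinite matrix, as `Matrix.PosSemidef.sqrt` was defined
in the older Mathlib (removed since in favour of `CFC.sqrt`). -/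
noncomputable def Matrix.PosSemidef.sqrt {n 𝕜 : Type*} [Fintype n] [DecidableEq n] [RCLike 𝕜]
    {A : Matrix n n 𝕜} (hA : A.PosSemidef) : Matrix n n 𝕜 :=
  hA.1.eigenvectorUnitary.1 * diagonal ((↑) ∘ Real.sqrt ∘ hA.1.eigenvalues) *
  (star hA.1.eigenvectorUnitary : Matrix n n 𝕜)

end

namespace Matrix.PosSemidef

open scoped ComplexOrder

variable {n 𝕜 : Type*} [Fintype n] [DecidableEq n] [RCLike 𝕜] {A : Matrix n n 𝕜}

theorem isHermitian_sqrt (hA : A.PosSemidef) : hA.sqrt.IsHermitian := by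
  have hreal : star (((↑) : ℝ → 𝕜) ∘ Real.sqrt ∘ hA.1.eigenvalues) =
      (↑) ∘ Real.sqrt ∘ hA.1.eigenvalues := by
    funext i
    simp
  rw [IsHermitian, sqrt, conjTranspose_mul, conjTranspose_mul, diagonal_conjTranspose, hreal,
    star_eq_conjTranspose, conjTranspose_conjTranspose, Matrix.mul_assoc]

theorem sqrt_mul_self (hA : A.PosSemidef) : hA.sqrt * hA.sqrt = A := by
  have hdiag : diagonal ((↑) ∘ Real.sqrt ∘ hA.1.eigenvalues) *
      diagonal ((↑) ∘ Real.sqrt ∘ hA.1.eigenvalues) =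
      diagonal (((↑) : ℝ → 𝕜) ∘ hA.1.eigenvalues) := by
    rw [diagonal_mul_diagonal]
    congr 1
    funext i
    simp [← RCLike.ofReal_mul, Real.mul_self_sqrt (hA.eigenvalues_nonneg i)]
  conv_rhs => rw [hA.1.spectral_theorem, Unitary.conjStarAlgAut_apply]
  simp only [sqrt, Matrix.mul_assoc]
  rw [← Matrix.mul_assoc (star _ : Matrix n n 𝕜), Unitary.coe_star_mul_self, Matrix.one_mul,
    ← Matrix.mul_assoc (diagonal _), hdiag]

end Matrix.PosSemidef

section
variable {R k l : Type*} [CommRing R] [Fintype k] [Fintype l]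

theorem Matrix.trace_transpose_mul_self_sub_vecMulVec (A : Matrix k l R) (x : k → R) (y : l → R) :
    trace ((A - vecMulVec x y)ᵀ * (A - vecMulVec x y)) =
      trace (Aᵀ * A) - 2 * (x ⬝ᵥ A *ᵥ y) + (x ⬝ᵥ x) * (y ⬝ᵥ y) := by
  have hcross : trace (Aᵀ * vecMulVec x y) = x ⬝ᵥ A *ᵥ y := by
    rw [mul_vecMulVec, trace_vecMulVec, mulVec_transpose, dotProduct_mulVec]
  have hcross' : trace ((vecMulVec x y)ᵀ * A) = x ⬝ᵥ A *ᵥ y := by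
    rw [← trace_transpose, transpose_mul, transpose_transpose, hcross]
  rw [transpose_sub, Matrix.sub_mul, Matrix.mul_sub, Matrix.mul_sub, trace_sub, trace_sub,
    trace_sub, hcross, hcross', transpose_vecMulVec, vecMulVec_mul, vecMul_vecMulVec,
    trace_vecMulVec, dotProduct_smul, smul_eq_mul]
  ring

theorem Matrix.mulVec_dotProduct_mulVec_mulVec (A : Matrix k l R) (M : Matrix k k R)
    (u : l → R) : A *ᵥ u ⬝ᵥ M *ᵥ (A *ᵥ u) = u ⬝ᵥ (Aᵀ * M * A) *ᵥ u := by
  rw [← mulVec_mulVec, ← mulVec_mulVec, dotProduct_mulVec u, vecMul_transpose]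

theorem Matrix.mulVec_dotProduct_mulVec_self (A : Matrix k l R) (u : l → R) :
    A *ᵥ u ⬝ᵥ A *ᵥ u = u ⬝ᵥ (Aᵀ * A) *ᵥ u := by
  rw [← mulVec_mulVec, dotProduct_mulVec u, vecMul_transpose]

theorem Matrix.IsSymm.dotProduct_self_add_mulVec_sub {P : Matrix k k R} (hP : P.IsSymm)
    (hPP : IsIdempotentElem P) {s : k → R} (hs : P *ᵥ s = s) (q : k → R) :
    (s + P *ᵥ q) ⬝ᵥ (s + P *ᵥ q) - 2 * ((s + P *ᵥ q) ⬝ᵥ q) = s ⬝ᵥ s - q ⬝ᵥ P *ᵥ q := by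
  have hsP : s ⬝ᵥ P *ᵥ q = s ⬝ᵥ q := by
    rw [dotProduct_mulVec, ← mulVec_transpose, hP.eq, hs]
  have hPP' : P *ᵥ q ⬝ᵥ P *ᵥ q = q ⬝ᵥ P *ᵥ q := by
    rw [mulVec_dotProduct_mulVec_self, hP.eq, hPP.eq]
  simp only [add_dotProduct, dotProduct_add, hsP, hPP', dotProduct_comm (P *ᵥ q) s,
    dotProduct_comm (P *ᵥ q) q]
  ring

end

open scoped ComplexOrder in
theorem Matrix.PosSemidef.sqrt_mulVec_dotProduct_self {n : Type*} [Fintype n] [DecidableEq n]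
    {A : Matrix n n ℝ} (hA : A.PosSemidef) (u : n → ℝ) :
    hA.sqrt *ᵥ u ⬝ᵥ hA.sqrt *ᵥ u = u ⬝ᵥ A *ᵥ u := by
  rw [mulVec_dotProduct_mulVec_self, ← conjTranspose_eq_transpose_of_trivial,
    hA.isHermitian_sqrt.eq, hA.sqrt_mul_self]

theorem risk_premia_identity {d m n : ℕ}
    (ρ : Fin d → ℝ) (C : Matrix (Fin m) (Fin d) ℝ)
    (hD : ((1 : Matrix (Fin m) (Fin m) ℝ) - (ρ ⬝ᵥ ρ) • (C * Cᵀ)).PosSemidef)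
    (σ : Matrix (Fin n) (Fin m) ℝ) (ν : Fin n → ℝ)
    (Θ : Matrix (Fin m) (Fin m) ℝ) (hΘsymm : Θᵀ = Θ)
    (hΘ2 : Θ * Θ = Θ) (hσΘ : σ * Θ = σ)
    (η : Matrix (Fin d) (Fin d) ℝ) :
    let D := hD.sqrt
    let T := -Matrix.vecMulVec ((Cᵀ * σᵀ) *ᵥ ν) ρ + η
      - Matrix.vecMulVec ((Cᵀ * Θ * C * η) *ᵥ ρ) ρ
    let w := (Dᵀ * σᵀ) *ᵥ ν + (Dᵀ * Θ * C * η) *ᵥ ρ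
    Matrix.trace (Tᵀ * T) + w ⬝ᵥ w =
      ν ⬝ᵥ (σ * σᵀ) *ᵥ ν + Matrix.trace (ηᵀ * η)
        - ρ ⬝ᵥ (ηᵀ * Cᵀ * Θ * C * η) *ᵥ ρ := by
  intro D T w
  set s := σᵀ *ᵥ ν
  set q := (C * η) *ᵥ ρ
  set u := s + Θ *ᵥ q
  have hDsymm : Dᵀ = D := by
    simpa only [conjTranspose_eq_transpose_of_trivial] using hD.isHermitian_sqrt.eq
  have hT : T = η - vecMulVec (Cᵀ *ᵥ u) ρ := by
    simp only [T, u, s, q, mulVec_add, mulVec_mulVec, add_vecMulVec, Matrix.mul_assoc]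
    abel
  have hw : w = D *ᵥ u := by
    simp only [w, u, s, q, mulVec_add, mulVec_mulVec, hDsymm, Matrix.mul_assoc]
  have hΘs : Θ *ᵥ s = s := by
    rw [mulVec_mulVec, ← hΘsymm, ← transpose_mul, hσΘ]
  calc trace (Tᵀ * T) + w ⬝ᵥ w
      = trace (ηᵀ * η) + (u ⬝ᵥ u - 2 * (u ⬝ᵥ q)) := by
        have hww : w ⬝ᵥ w = u ⬝ᵥ u - (ρ ⬝ᵥ ρ) * (Cᵀ *ᵥ u ⬝ᵥ Cᵀ *ᵥ u) := by
          rw [hw, hD.sqrt_mulVec_dotProduct_self, sub_mulVec, one_mulVec, dotProduct_sub,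
            smul_mulVec, dotProduct_smul, smul_eq_mul, mulVec_dotProduct_mulVec_self,
            transpose_transpose]
        have hcross : Cᵀ *ᵥ u ⬝ᵥ η *ᵥ ρ = u ⬝ᵥ q := by
          rw [mulVec_transpose, ← dotProduct_mulVec, mulVec_mulVec]
        rw [hT, trace_transpose_mul_self_sub_vecMulVec, hww, hcross]
        ring
    _ = trace (ηᵀ * η) + (s ⬝ᵥ s - q ⬝ᵥ Θ *ᵥ q) := by
        rw [IsSymm.dotProduct_self_add_mulVec_sub hΘsymm hΘ2 hΘs]
    _ = ν ⬝ᵥ (σ * σᵀ) *ᵥ ν + trace (ηᵀ * η) - ρ ⬝ᵥ (ηᵀ * Cᵀ * Θ * C * η) *ᵥ ρ := by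
        rw [mulVec_dotProduct_mulVec_self, mulVec_dotProduct_mulVec_mulVec, transpose_transpose,
          transpose_mul]
        simp only [Matrix.mul_assoc]
        ring
end
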